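/- arXiv:2604.01685 — 2 statements merged into one kernel-verified Lean document; each statement's English description precedes it below -/
import Mathlib

section
/- Let X be a compact topological space, 𝓐 an algebra of sets on X, and μ : 𝓐 → [0,∞] finitely additive (μ(A ∪ B) = μ(A) + μ(B) for disjoint A, B ∈ 𝓐). Suppose that for every A ∈ 𝓐 and every ε > 0 there is a B ∈ 𝓐 whose topological closure satisfies cl(B) ⊆ A and μ(A ∖ B) ≤ ε. Then μ(∅) = 0 and μ is countably additive on 𝓐: μ(⋃ₙ Aₙ) = ∑ₙ μ(Aₙ) for every sequence (Aₙ) of pairwise disjoint sets from 𝓐 whose union lies in 𝓐. -/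
open MeasureTheory

/-- An inner-regular (w.r.t. closures) finitely additive set function on an algebra of
sets of a compact space vanishes at `∅` and is countably additive. -/
theorem countably_additive_of_compact_regular {X : Type*} [TopologicalSpace X]
    [CompactSpace X] (A : Set (Set X))
    (hempty : ∅ ∈ A) (hcompl : ∀ s ∈ A, sᶜ ∈ A) (hunion : ∀ s ∈ A, ∀ t ∈ A, s ∪ t ∈ A)
    (μ : Set X → ENNReal)
    (hadd : ∀ s ∈ A, ∀ t ∈ A, Disjoint s t → μ (s ∪ t) = μ s + μ t)
    (hreg : ∀ s ∈ A, ∀ ε : ENNReal, 0 < ε → ∃ t ∈ A, closure t ⊆ s ∧ μ (s \ t) ≤ ε) :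
    μ ∅ = 0 ∧
    ∀ f : ℕ → Set X, (∀ n, f n ∈ A) → Pairwise (Function.onFun Disjoint f) → (⋃ n, f n) ∈ A →
      μ (⋃ n, f n) = ∑' n, μ (f n) := by
  classical
  have hinter : ∀ s ∈ A, ∀ t ∈ A, s ∩ t ∈ A := by
    intro s hs t ht
    have h := hcompl _ (hunion _ (hcompl s hs) _ (hcompl t ht))
    rwa [Set.compl_union, compl_compl, compl_compl] at h
  have hdiff : ∀ s ∈ A, ∀ t ∈ A, s \ t ∈ A := by
    intro s hs t ht
    rw [Set.diff_eq]
    exact hinter s hs _ (hcompl t ht)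
  have hmono : ∀ s ∈ A, ∀ t ∈ A, s ⊆ t → μ s ≤ μ t := by
    intro s hs t ht hst
    have he : t = s ∪ t \ s := (Set.union_diff_cancel hst).symm
    rw [he, hadd s hs _ (hdiff t ht s hs) Set.disjoint_sdiff_right]
    exact le_self_add
  have hμ0 : μ ∅ = 0 := by
    refine le_antisymm (ENNReal.le_of_forall_pos_le_add fun ε hε _ => ?_) zero_le
    obtain ⟨t, ht, hct, hμt⟩ := hreg ∅ hempty ε (by exact_mod_cast hε)
    rw [Set.empty_diff] at hμt
    simpa using hμt
  have hsub2 : ∀ s ∈ A, ∀ t ∈ A, μ (s ∪ t) ≤ μ s + μ t := by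
    intro s hs t ht
    have he : s ∪ t = s ∪ t \ s := Set.union_diff_self.symm
    rw [he, hadd s hs _ (hdiff t ht s hs) Set.disjoint_sdiff_right]
    exact add_le_add_right (hmono _ (hdiff t ht s hs) _ ht Set.diff_subset) _
  have hfinU : ∀ (s : Finset ℕ) (g : ℕ → Set X), (∀ n, g n ∈ A) → (⋃ n ∈ s, g n) ∈ A := by
    intro s g hg
    induction s using Finset.induction with
    | empty => simpa using hempty
    | insert _ _ _ ih =>
      rw [Finset.set_biUnion_insert]
      exact hunion _ (hg _) _ ih
  have hfinsub : ∀ (s : Finset ℕ) (g : ℕ → Set X), (∀ n, g n ∈ A) →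
      μ (⋃ n ∈ s, g n) ≤ ∑ n ∈ s, μ (g n) := by
    intro s g hg
    induction s using Finset.induction with
    | empty => simp [hμ0]
    | @insert a s ha ih =>
      rw [Finset.set_biUnion_insert, Finset.sum_insert ha]
      exact (hsub2 _ (hg a) _ (hfinU s g hg)).trans (add_le_add_right ih _)
  have hfinadd : ∀ (s : Finset ℕ) (g : ℕ → Set X), (∀ n, g n ∈ A) →
      Pairwise (Function.onFun Disjoint g) → μ (⋃ n ∈ s, g n) = ∑ n ∈ s, μ (g n) := by
    intro s g hg hdisj
    induction s using Finset.induction with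
    | empty => simp [hμ0]
    | @insert a s ha ih =>
      have hd : Disjoint (g a) (⋃ n ∈ s, g n) := by
        refine Set.disjoint_left.mpr fun x hx hx' => ?_
        simp only [Set.mem_iUnion] at hx'
        obtain ⟨n, hn, hxn⟩ := hx'
        exact Set.disjoint_left.mp (hdisj (by rintro rfl; exact ha hn)) hx hxn
      rw [Finset.set_biUnion_insert, Finset.sum_insert ha,
        hadd _ (hg a) _ (hfinU s g hg) hd, ih]
  refine ⟨hμ0, fun f hf hdisj hU => ?_⟩
  refine le_antisymm ?_ ?_
  · -- hard direction via compactness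
    refine ENNReal.le_of_forall_pos_le_add fun ε hε _ => ?_
    set δ : ENNReal := (ε : ENNReal) / 2 with hδdef
    have hδ0 : 0 < δ := ENNReal.div_pos (by exact_mod_cast hε.ne') ENNReal.ofNat_ne_top
    obtain ⟨B, hB, hclB, hμB⟩ := hreg _ hU δ hδ0
    have h1 : ∀ n : ℕ, ∃ t ∈ A, closure t ⊆ (f n)ᶜ ∧ μ ((f n)ᶜ \ t) ≤ δ / 2 ^ (n + 1) :=
      fun n => hreg _ (hcompl _ (hf n)) _
        (ENNReal.div_pos hδ0.ne' (ENNReal.pow_ne_top ENNReal.ofNat_ne_top))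
    choose t ht hct hμt using h1
    have htc : ∀ n, (t n)ᶜ ∈ A := fun n => hcompl _ (ht n)
    have hkey : ∀ n, μ (t n)ᶜ ≤ μ (f n) + δ / 2 ^ (n + 1) := by
      intro n
      have hsubn : f n ⊆ (t n)ᶜ := fun x hx hxt => hct n (subset_closure hxt) hx
      have he : (t n)ᶜ = f n ∪ (t n)ᶜ \ f n := (Set.union_diff_cancel hsubn).symm
      have he2 : (t n)ᶜ \ f n = (f n)ᶜ \ t n := by
        ext x; simp only [Set.mem_diff, Set.mem_compl_iff]; tauto
      rw [he, hadd _ (hf n) _ (hdiff _ (htc n) _ (hf n)) Set.disjoint_sdiff_right, he2]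
      exact add_le_add_right (hμt n) _
    have hcomp : IsCompact (closure B) := isClosed_closure.isCompact
    have hcover : closure B ⊆ ⋃ n, (closure (t n))ᶜ :=
      hclB.trans (Set.iUnion_mono fun n => Set.subset_compl_comm.mp (hct n))
    obtain ⟨s, hs⟩ := hcomp.elim_finite_subcover (fun n => (closure (t n))ᶜ)
      (fun n => isClosed_closure.isOpen_compl) hcover
    have hBU : B ⊆ ⋃ n, f n := subset_closure.trans hclB
    have hμU : μ (⋃ n, f n) = μ B + μ ((⋃ n, f n) \ B) := by
      conv_lhs => rw [(Set.union_diff_cancel hBU).symm]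
      exact hadd _ hB _ (hdiff _ hU _ hB) Set.disjoint_sdiff_right
    have hμB2 : μ B ≤ ∑ n ∈ s, μ (t n)ᶜ := by
      refine le_trans (hmono _ hB _ (hfinU s (fun n => (t n)ᶜ) htc) ?_) (hfinsub s _ htc)
      exact subset_closure.trans (hs.trans
        (Set.iUnion₂_mono fun n _ => Set.compl_subset_compl.mpr subset_closure))
    have htsum : ∑' n : ℕ, δ / 2 ^ (n + 1) = δ := by
      simp_rw [div_eq_mul_inv, ENNReal.inv_pow, ENNReal.tsum_mul_left,
        ENNReal.tsum_geometric_add_one, ENNReal.one_sub_inv_two]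
      rw [inv_inv, ENNReal.inv_mul_cancel two_ne_zero ENNReal.ofNat_ne_top, mul_one]
    have hsum : ∑ n ∈ s, μ (t n)ᶜ ≤ (∑' n, μ (f n)) + δ := by
      calc ∑ n ∈ s, μ (t n)ᶜ ≤ ∑ n ∈ s, (μ (f n) + δ / 2 ^ (n + 1)) :=
            Finset.sum_le_sum fun n _ => hkey n
        _ = (∑ n ∈ s, μ (f n)) + ∑ n ∈ s, δ / 2 ^ (n + 1) := Finset.sum_add_distrib
        _ ≤ (∑' n, μ (f n)) + δ := by
            refine add_le_add (ENNReal.sum_le_tsum s) ?_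
            exact le_trans (ENNReal.sum_le_tsum s) htsum.le
    calc μ (⋃ n, f n) = μ B + μ ((⋃ n, f n) \ B) := hμU
      _ ≤ ((∑' n, μ (f n)) + δ) + δ := add_le_add (hμB2.trans hsum) hμB
      _ = (∑' n, μ (f n)) + ε := by rw [add_assoc, hδdef, ENNReal.add_halves]
  · rw [ENNReal.tsum_eq_iSup_sum]
    refine iSup_le fun s => ?_
    rw [← hfinadd s f hf hdisj]
    exact hmono _ (hfinU s f hf) _ hU (Set.iUnion₂_subset fun n _ => Set.subset_iUnion f n)
end

section
/- (Kolmogorov extension theorem.) Let Λ be an arbitrary set and X a locally compact, second-countable, Hausdorff topological space. For each finite subset F ⊆ Λ let μ_F be a probability measure on (X^F, 𝓑_X^{⊗F}), and suppose the family is consistent: for all finite F ⊆ G ⊆ Λ, the push-forward of μ_G under the canonical restriction map X^G → X^F equals μ_F. Then there exists a unique probability measure μ on (X^Λ, 𝓑_X^{⊗Λ}) such that the push-forward of μ under the canonical restriction map X^Λ → X^F equals μ_F for every finite F ⊆ Λ. -/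
open MeasureTheory Set Filter Topology
open scoped ENNReal
set_option linter.unusedSectionVars false

namespace KolmogorovAux

/-! ### Generic lemmas -/

theorem isSetRing_measurableCylinders {ι : Type*} {α : ι → Type*} [∀ i, MeasurableSpace (α i)] :
    IsSetRing (measurableCylinders α) :=
  ⟨empty_mem_measurableCylinders α, fun _ _ hs ht => union_mem_measurableCylinders hs ht,
    fun _ _ hs ht => diff_mem_measurableCylinders hs ht⟩

/-- Build an additive content on a ring of sets from additivity on disjoint pairs. -/
def addContentOfUnion {β : Type*} (C : Set (Set β)) (hC : IsSetRing C) (m : Set β → ℝ≥0∞)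
    (h0 : m ∅ = 0)
    (hadd : ∀ s ∈ C, ∀ t ∈ C, Disjoint s t → m (s ∪ t) = m s + m t) : AddContent ℝ≥0∞ C where
  toFun := m
  empty' := h0
  sUnion' I h_ss h_dis h_mem := by
    classical
    induction I using Finset.induction with
    | empty => simpa using h0
    | @insert u I hu ih =>
      rw [Finset.coe_insert] at h_ss h_dis
      rw [Finset.coe_insert, Set.sUnion_insert] at h_mem
      rw [Finset.coe_insert, Set.sUnion_insert]
      have huC : u ∈ C := h_ss (Set.mem_insert _ _)
      have hIC : ↑I ⊆ C := fun v hv => h_ss (Set.mem_insert_of_mem _ hv)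
      have hIU : ⋃₀ ↑I ∈ C := by
        rw [Set.sUnion_eq_biUnion]
        exact hC.biUnion_mem I (fun v hv => hIC (by exact_mod_cast hv))
      have hdisj : Disjoint u (⋃₀ ↑I) := by
        rw [Set.disjoint_sUnion_right]
        intro v hv
        exact h_dis (Set.mem_insert _ _) (Set.mem_insert_of_mem _ hv)
          (fun h => hu (by simpa [h] using hv))
      rw [hadd u huC _ hIU hdisj, ih hIC (h_dis.subset (Set.subset_insert _ _)) hIU,
        Finset.sum_insert hu]

/-- Compactness core: a decreasing-in-the-finite sense family of cylinders with compact closed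
bases whose finite intersections are nonempty has nonempty intersection. -/
theorem nonempty_iInter_cylinder {ι X : Type*} [TopologicalSpace X] [T2Space X]
    (J : ℕ → Finset ι) (K : (n : ℕ) → Set (↥(J n) → X))
    (hK : ∀ n, IsCompact (K n))
    (hne : ∀ n : ℕ, (⋂ k ∈ Finset.range (n + 1), cylinder (α := fun _ : ι => X) (J k) (K k)).Nonempty) :
    (⋂ n, cylinder (α := fun _ : ι => X) (J n) (K n)).Nonempty := by
  classical
  choose x hx using hne
  have hx' : ∀ k n, k ≤ n → (J k).restrict (x n) ∈ K k := by
    intro k n hkn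
    have h := Set.mem_iInter₂.1 (hx n) k (Finset.mem_range.2 (Nat.lt_succ_of_le hkn))
    exact (mem_cylinder _ _ _).1 h
  set 𝒰 : Ultrafilter ℕ := Ultrafilter.of atTop with h𝒰def
  have h𝒰 : (𝒰 : Filter ℕ) ≤ atTop := Ultrafilter.of_le _
  have hlim : ∀ m, ∃ z ∈ K m, Tendsto (fun n => (J m).restrict (x n)) 𝒰 (𝓝 z) := by
    intro m
    have hmem : ∀ᶠ n in (𝒰 : Filter ℕ), (J m).restrict (x n) ∈ K m :=
      h𝒰 (eventually_atTop.2 ⟨m, fun n hn => hx' m n hn⟩)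
    obtain ⟨z, hzK, hz⟩ := (hK m).ultrafilter_le_nhds
      (𝒰.map fun n => (J m).restrict (x n))
      (by rwa [Ultrafilter.coe_map, Filter.le_principal_iff, Filter.mem_map])
    exact ⟨z, hzK, hz⟩
  choose z hzK hz using hlim
  have key : ∀ (i : ι) (m : ℕ) (him : i ∈ J m),
      Tendsto (fun n => x n i) 𝒰 (𝓝 (z m ⟨i, him⟩)) := by
    intro i m him
    exact ((continuous_apply (⟨i, him⟩ : (J m : Finset ι))).continuousAt.tendsto).comp (hz m)
  refine ⟨fun i => if h : ∃ m, i ∈ J m then z h.choose ⟨i, h.choose_spec⟩ else x 0 i, ?_⟩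
  rw [Set.mem_iInter]
  intro m
  rw [mem_cylinder]
  have : (J m).restrict (fun i => if h : ∃ m, i ∈ J m then z h.choose ⟨i, h.choose_spec⟩
      else x 0 i) = z m := by
    funext i
    have hex : ∃ m', (i : ι) ∈ J m' := ⟨m, i.2⟩
    show (if h : ∃ m', (i : ι) ∈ J m' then z h.choose ⟨i, h.choose_spec⟩ else x 0 i) = z m i
    rw [dif_pos hex]
    exact tendsto_nhds_unique (key i hex.choose hex.choose_spec) (key i m i.2)
  rw [this]
  exact hzK m

/-! ### The Kolmogorov content -/

section Kolmogorov

variable {Λ : Type*} {X : Type*} [TopologicalSpace X]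
    [LocallyCompactSpace X] [SecondCountableTopology X] [T2Space X]
    [MeasurableSpace X] [BorelSpace X]
    (μ : (F : Finset Λ) → Measure (F → X))

open Classical in
/-- The set function underlying the Kolmogorov extension: value of the projective family on
measurable cylinders, `∞` elsewhere. -/
noncomputable def kolFun (s : Set (Λ → X)) : ℝ≥0∞ :=
  if h : s ∈ measurableCylinders (fun _ : Λ => X) then
    μ (measurableCylinders.finset h) (measurableCylinders.set h) else ∞

variable (hproj : IsProjectiveMeasureFamily (α := fun _ : Λ => X) μ)

include hproj in
theorem kolFun_cylinder (J : Finset Λ) {S : Set (↥J → X)} (hS : MeasurableSet S) :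
    kolFun μ (cylinder J S) = μ J S := by
  have h : cylinder J S ∈ measurableCylinders (fun _ : Λ => X) :=
    cylinder_mem_measurableCylinders (α := fun _ : Λ => X) J S hS
  rw [kolFun, dif_pos h]
  exact hproj.congr_cylinder (measurableCylinders.measurableSet h) hS
    (measurableCylinders.eq_cylinder h).symm

theorem kolFun_of_not_mem {s : Set (Λ → X)}
    (hs : s ∉ measurableCylinders (fun _ : Λ => X)) : kolFun μ s = ∞ := by
  unfold kolFun
  exact dif_neg hs

include hproj in
theorem kolFun_empty : kolFun μ (∅ : Set (Λ → X)) = 0 := by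
  rw [show (∅ : Set (Λ → X)) = cylinder (∅ : Finset Λ) ∅ from (cylinder_empty _).symm,
    kolFun_cylinder μ hproj _ MeasurableSet.empty, measure_empty]

include hproj in
theorem kolFun_union [Nonempty (Λ → X)] {s t : Set (Λ → X)}
    (hs : s ∈ measurableCylinders (fun _ : Λ => X))
    (ht : t ∈ measurableCylinders (fun _ : Λ => X)) (hd : Disjoint s t) :
    kolFun μ (s ∪ t) = kolFun μ s + kolFun μ t := by
  classical
  obtain ⟨I, S, hS, rfl⟩ := (mem_measurableCylinders (α := fun _ : Λ => X) _).1 hs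
  obtain ⟨J, T, hT, rfl⟩ := (mem_measurableCylinders (α := fun _ : Λ => X) _).1 ht
  have hS' : MeasurableSet (Finset.restrict₂ (π := fun _ : Λ => X) (Finset.subset_union_left (s₂ := J)) ⁻¹' S) :=
    Finset.measurable_restrict₂ _ hS
  have hT' : MeasurableSet (Finset.restrict₂ (π := fun _ : Λ => X) (Finset.subset_union_right (s₁ := I)) ⁻¹' T) :=
    Finset.measurable_restrict₂ _ hT
  have hcylS : cylinder (α := fun _ : Λ => X) I S =
      cylinder (α := fun _ : Λ => X) (I ∪ J) (Finset.restrict₂ (π := fun _ : Λ => X) Finset.subset_union_left ⁻¹' S) := by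
    ext f; simp [Finset.restrict_def, Finset.restrict₂_def]
  have hcylT : cylinder (α := fun _ : Λ => X) J T =
      cylinder (α := fun _ : Λ => X) (I ∪ J) (Finset.restrict₂ (π := fun _ : Λ => X) Finset.subset_union_right ⁻¹' T) := by
    ext f; simp [Finset.restrict_def, Finset.restrict₂_def]
  have hdisj : Disjoint (Finset.restrict₂ (π := fun _ : Λ => X) (Finset.subset_union_left (s₂ := J)) ⁻¹' S)
      (Finset.restrict₂ (π := fun _ : Λ => X) (Finset.subset_union_right (s₁ := I)) ⁻¹' T) :=
    disjoint_cylinder_iff.1 hd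
  have hSmap : μ I S = μ (I ∪ J) (Finset.restrict₂ (π := fun _ : Λ => X) Finset.subset_union_left ⁻¹' S) := by
    rw [hproj (I ∪ J) I Finset.subset_union_left,
      Measure.map_apply (Finset.measurable_restrict₂ (X := fun _ : Λ => X) _) hS]
  have hTmap : μ J T = μ (I ∪ J) (Finset.restrict₂ (π := fun _ : Λ => X) Finset.subset_union_right ⁻¹' T) := by
    rw [hproj (I ∪ J) J Finset.subset_union_right,
      Measure.map_apply (Finset.measurable_restrict₂ (X := fun _ : Λ => X) _) hT]
  rw [hcylS, hcylT, union_cylinder_same, kolFun_cylinder μ hproj _ (hS'.union hT'),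
    kolFun_cylinder μ hproj _ hS', kolFun_cylinder μ hproj _ hT',
    measure_union hdisj hT']

/-- The additive content on measurable cylinders induced by the projective family. -/
noncomputable def kolContent [Nonempty (Λ → X)] :
    AddContent ℝ≥0∞ (measurableCylinders (fun _ : Λ => X)) :=
  addContentOfUnion _ isSetRing_measurableCylinders (kolFun μ) (kolFun_empty μ hproj)
    (fun _ hs _ ht hd => kolFun_union μ hproj hs ht hd)

theorem kolContent_apply [Nonempty (Λ → X)] (s : Set (Λ → X)) :
    kolContent μ hproj s = kolFun μ s := rfl

include hproj in
theorem kolFun_mono [Nonempty (Λ → X)] {s t : Set (Λ → X)}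
    (hs : s ∈ measurableCylinders (fun _ : Λ => X))
    (ht : t ∈ measurableCylinders (fun _ : Λ => X)) (hst : s ⊆ t) :
    kolFun μ s ≤ kolFun μ t := by
  rw [← kolContent_apply μ hproj, ← kolContent_apply μ hproj]
  exact addContent_mono isSetRing_measurableCylinders.isSetSemiring hs ht hst

variable (hprob : ∀ F : Finset Λ, IsProbabilityMeasure (μ F))

include hproj hprob in
theorem kolFun_ne_top {s : Set (Λ → X)} (hs : s ∈ measurableCylinders (fun _ : Λ => X)) :
    kolFun μ s ≠ ∞ := by
  obtain ⟨J, S, hS, rfl⟩ := (mem_measurableCylinders _).1 hs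
  rw [kolFun_cylinder μ hproj _ hS]
  haveI := hprob J
  exact measure_ne_top _ _

include hproj hprob in
/-- Key lemma: a decreasing sequence of cylinders with contents bounded below has nonempty
intersection. Uses inner regularity and the compactness of closed cylinders. -/
theorem nonempty_iInter_of_kolFun [Nonempty (Λ → X)]
    (B : ℕ → Set (Λ → X)) (hB : ∀ n, B n ∈ measurableCylinders (fun _ : Λ => X))
    (hanti : Antitone B) {ε : ℝ≥0∞} (hε0 : ε ≠ 0) (hεtop : ε ≠ ∞)
    (hBε : ∀ n, ε ≤ kolFun μ (B n)) :
    (⋂ n, B n).Nonempty := by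
  classical
  have hrep : ∀ n, ∃ (J : Finset Λ) (S : Set (↥J → X)),
      MeasurableSet S ∧ B n = cylinder J S := fun n => (mem_measurableCylinders _).1 (hB n)
  choose J S hS hBe using hrep
  -- inner regular approximation by compacts
  have hreg : ∀ n, ∃ K, K ⊆ S n ∧ IsCompact K ∧ μ (J n) (S n \ K) ≤ ε / 2 ^ (n + 2) := by
    intro n
    haveI := hprob (J n)
    have h1 : μ (J n) (S n) ≠ ∞ := measure_ne_top _ _
    have hε' : ε / 2 ^ (n + 2) ≠ 0 := by
      rw [ne_eq, ENNReal.div_eq_zero_iff, not_or]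
      exact ⟨hε0, ENNReal.pow_ne_top (by norm_num)⟩
    obtain ⟨K, hKS, hKc, hμ⟩ := (hS n).exists_isCompact_lt_add h1 hε'
    refine ⟨K, hKS, hKc, ?_⟩
    have hKm : MeasurableSet K := hKc.isClosed.measurableSet
    rw [measure_diff hKS hKm.nullMeasurableSet (measure_ne_top _ _)]
    exact tsub_le_iff_right.2 (le_of_lt (by rwa [add_comm] at hμ))
  choose K hKS hKc hKμ using hreg
  set C : ℕ → Set (Λ → X) := fun n => cylinder (J n) (K n) with hCdef
  have hCB : ∀ n, C n ⊆ B n := by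
    intro n
    rw [hBe n]
    exact Set.preimage_mono (hKS n)
  have hCQ : ∀ n, C n ∈ measurableCylinders (fun _ : Λ => X) := fun n =>
    cylinder_mem_measurableCylinders _ _ (hKc n).isClosed.measurableSet
  have hBC : ∀ n, kolFun μ (B n \ C n) ≤ ε / 2 ^ (n + 2) := by
    intro n
    have : B n \ C n = cylinder (J n) (S n \ K n) := by
      rw [hBe n, hCdef]
      exact (diff_cylinder_same _ _ _).symm
    rw [this, kolFun_cylinder μ hproj _ ((hS n).diff (hKc n).isClosed.measurableSet)]
    exact hKμ n
  -- the finite intersections of the compact cylinders are nonempty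
  have htsum : ∀ n : ℕ, (∑ k ∈ Finset.range (n + 1), ε / 2 ^ (k + 2)) ≤ ε / 2 := by
    intro n
    calc (∑ k ∈ Finset.range (n + 1), ε / 2 ^ (k + 2))
        ≤ ∑' k : ℕ, ε / 2 ^ (k + 2) := ENNReal.sum_le_tsum _
      _ = ∑' k : ℕ, (ε * (2 : ℝ≥0∞)⁻¹ ^ 2) * (2 : ℝ≥0∞)⁻¹ ^ k := by
          congr 1; funext k
          rw [div_eq_mul_inv, ENNReal.inv_pow, pow_add]
          ring
      _ = (ε * (2 : ℝ≥0∞)⁻¹ ^ 2) * 2 := by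
          rw [ENNReal.tsum_mul_left, ENNReal.tsum_geometric, ENNReal.one_sub_inv_two, inv_inv]
      _ = ε / 2 := by
          rw [pow_two, mul_assoc, mul_assoc,
            ENNReal.inv_mul_cancel two_ne_zero ENNReal.ofNat_ne_top, mul_one, div_eq_mul_inv]
  have hDne : ∀ n : ℕ, (⋂ k ∈ Finset.range (n + 1), C k).Nonempty := by
    intro n
    by_contra hcon
    rw [Set.not_nonempty_iff_eq_empty] at hcon
    have hsub : B n ⊆ ⋃ k ∈ Finset.range (n + 1), (B k \ C k) := by
      intro a ha
      by_contra hcon2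
      simp only [Set.mem_iUnion, Set.mem_diff, not_exists, not_and, not_not] at hcon2
      have : a ∈ ⋂ k ∈ Finset.range (n + 1), C k :=
        Set.mem_iInter₂.2 fun k hk =>
          hcon2 k hk (hanti (Nat.le_of_lt_succ (Finset.mem_range.1 hk)) ha)
      rw [hcon] at this
      exact this
    have hUQ : (⋃ k ∈ Finset.range (n + 1), (B k \ C k)) ∈
        measurableCylinders (fun _ : Λ => X) :=
      isSetRing_measurableCylinders.biUnion_mem _
        (fun k _ => isSetRing_measurableCylinders.sdiff_mem (hB k) (hCQ k))
    have h1 : kolFun μ (B n) ≤ ∑ k ∈ Finset.range (n + 1), kolFun μ (B k \ C k) := by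
      refine le_trans (kolFun_mono μ hproj (hB n) hUQ hsub) ?_
      rw [← kolContent_apply μ hproj]
      refine le_trans (addContent_biUnion_le isSetRing_measurableCylinders
        (fun k _ => isSetRing_measurableCylinders.sdiff_mem (hB k) (hCQ k))) ?_
      exact le_of_eq rfl
    have h2 : kolFun μ (B n) ≤ ε / 2 :=
      le_trans h1 (le_trans (Finset.sum_le_sum fun k _ => hBC k) (htsum n))
    have h3 : ε ≤ ε / 2 := le_trans (hBε n) h2
    have h4 : ε / 2 < ε := ENNReal.half_lt_self hε0 hεtop
    exact absurd h3 (not_le.2 h4)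
  have hfinal := nonempty_iInter_cylinder J K hKc hDne
  exact hfinal.mono (Set.iInter_mono hCB)

include hproj hprob in
/-- Countable subadditivity of `kolFun` on measurable cylinders. -/
theorem kolFun_tsum_le [Nonempty (Λ → X)] {s : Set (Λ → X)} {f : ℕ → Set (Λ → X)}
    (hs : s ∈ measurableCylinders (fun _ : Λ => X))
    (hf : ∀ n, f n ∈ measurableCylinders (fun _ : Λ => X)) (hsub : s ⊆ ⋃ n, f n) :
    kolFun μ s ≤ ∑' n, kolFun μ (f n) := by
  classical
  set B : ℕ → Set (Λ → X) := fun N => s \ ⋃ k ∈ Finset.range N, f k with hBdef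
  have hBQ : ∀ N, B N ∈ measurableCylinders (fun _ : Λ => X) := fun N =>
    isSetRing_measurableCylinders.sdiff_mem hs
      (isSetRing_measurableCylinders.biUnion_mem _ (fun k _ => hf k))
  have hanti : Antitone B := by
    intro N M hNM
    refine Set.diff_subset_diff_right ?_
    exact Set.biUnion_subset_biUnion_left (Finset.range_subset_range.2 hNM)
  have hInter : ⋂ N, B N = ∅ := by
    ext a
    simp only [Set.mem_iInter, Set.mem_empty_iff_false, iff_false, not_forall]
    by_cases ha : a ∈ s
    · obtain ⟨n, hn⟩ := Set.mem_iUnion.1 (hsub ha)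
      refine ⟨n + 1, fun hmem => hmem.2 ?_⟩
      exact Set.mem_biUnion (Finset.mem_range.2 (Nat.lt_succ_self n)) hn
    · exact ⟨0, fun hmem => ha hmem.1⟩
  have hinf : ⨅ N, kolFun μ (B N) = 0 := by
    by_contra h
    obtain ⟨a, ha⟩ := nonempty_iInter_of_kolFun μ hproj hprob B hBQ hanti h
      (by
        refine ne_top_of_le_ne_top (kolFun_ne_top μ hproj hprob (hBQ 0)) ?_
        exact iInf_le _ 0)
      (fun N => iInf_le _ N)
    rw [hInter] at ha
    exact ha
  have hmain : ∀ N, kolFun μ s ≤ kolFun μ (B N) + ∑' n, kolFun μ (f n) := by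
    intro N
    have hsplit : s ⊆ B N ∪ ⋃ k ∈ Finset.range N, (s ∩ f k) := by
      intro a ha
      by_cases h : a ∈ ⋃ k ∈ Finset.range N, f k
      · obtain ⟨k, hk, hak⟩ := Set.mem_iUnion₂.1 h
        exact Or.inr (Set.mem_iUnion₂.2 ⟨k, hk, ha, hak⟩)
      · exact Or.inl ⟨ha, h⟩
    have hUQ : (⋃ k ∈ Finset.range N, (s ∩ f k)) ∈ measurableCylinders (fun _ : Λ => X) :=
      isSetRing_measurableCylinders.biUnion_mem _
        (fun k _ => isSetRing_measurableCylinders.inter_mem hs (hf k))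
    calc kolFun μ s ≤ kolFun μ (B N ∪ ⋃ k ∈ Finset.range N, (s ∩ f k)) :=
          kolFun_mono μ hproj hs (isSetRing_measurableCylinders.union_mem (hBQ N) hUQ) hsplit
      _ ≤ kolFun μ (B N) + kolFun μ (⋃ k ∈ Finset.range N, (s ∩ f k)) := by
          rw [← kolContent_apply μ hproj, ← kolContent_apply μ hproj,
            ← kolContent_apply μ hproj]
          exact addContent_union_le isSetRing_measurableCylinders (hBQ N) hUQ
      _ ≤ kolFun μ (B N) + ∑ k ∈ Finset.range N, kolFun μ (s ∩ f k) := by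
          gcongr
          rw [← kolContent_apply μ hproj]
          exact le_trans (addContent_biUnion_le isSetRing_measurableCylinders
            (fun k _ => isSetRing_measurableCylinders.inter_mem hs (hf k))) le_rfl
      _ ≤ kolFun μ (B N) + ∑ k ∈ Finset.range N, kolFun μ (f k) := by
          gcongr with k hk
          exact kolFun_mono μ hproj (isSetRing_measurableCylinders.inter_mem hs (hf k)) (hf k)
            Set.inter_subset_right
      _ ≤ kolFun μ (B N) + ∑' n, kolFun μ (f n) := by
          gcongr
          exact ENNReal.sum_le_tsum _
  refine ENNReal.le_of_forall_pos_le_add fun η hη hfin => ?_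
  obtain ⟨N, hN⟩ := iInf_lt_iff.1 (show ⨅ N, kolFun μ (B N) < (η : ℝ≥0∞) by
    rw [hinf]; exact_mod_cast hη)
  refine le_trans (hmain N) ?_
  rw [add_comm]
  gcongr


end Kolmogorov

end KolmogorovAux

open KolmogorovAux

/-- Kolmogorov's extension theorem: a consistent family of probability measures on the
finite powers of a locally compact second-countable Hausdorff space extends uniquely to a
probability measure on the full product. -/
theorem kolmogorov_extension {Λ : Type*} (X : Type*) [TopologicalSpace X]
    [LocallyCompactSpace X] [SecondCountableTopology X] [T2Space X]
    [MeasurableSpace X] [BorelSpace X]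
    (μ : (F : Finset Λ) → Measure (F → X))
    (hprob : ∀ F : Finset Λ, IsProbabilityMeasure (μ F))
    (hconsistent : ∀ F G : Finset Λ, ∀ hFG : F ⊆ G,
      Measure.map (fun (x : G → X) (i : F) => x ⟨i.1, hFG i.2⟩) (μ G) = μ F) :
    ∃! m : Measure (Λ → X), IsProbabilityMeasure m ∧
      ∀ F : Finset Λ, Measure.map (fun (x : Λ → X) (i : F) => x i.1) m = μ F := by
  classical
  -- the full product space is nonempty
  have hne : Nonempty (Λ → X) := by
    rcases isEmpty_or_nonempty X with hX | hX
    · rcases isEmpty_or_nonempty Λ with hΛ | hΛ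
      · exact ⟨fun i => (hΛ.false i).elim⟩
      · exfalso
        obtain ⟨i⟩ := hΛ
        have h1 : IsEmpty (({i} : Finset Λ) → X) :=
          ⟨fun f => hX.false (f ⟨i, Finset.mem_singleton_self i⟩)⟩
        have h2 := (hprob {i}).measure_univ
        have h3 : (μ {i}) Set.univ = 0 := by
          rw [Set.univ_eq_empty_iff.2 h1]
          exact measure_empty
        rw [h2] at h3
        exact one_ne_zero h3
    · exact ⟨fun _ => hX.some⟩
  haveI := hne
  have hproj : IsProjectiveMeasureFamily (α := fun _ : Λ => X) μ := fun I J hJI =>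
    (hconsistent J I hJI).symm
  -- the outer measure generated by the content on cylinders
  set ν : OuterMeasure (Λ → X) := OuterMeasure.ofFunction (kolFun μ) (kolFun_empty μ hproj)
    with hνdef
  -- the outer measure agrees with the content on cylinders
  have hν_eq : ∀ s ∈ measurableCylinders (fun _ : Λ => X), ν s = kolFun μ s := by
    intro s hs
    refine le_antisymm (OuterMeasure.ofFunction_le s) ?_
    rw [hνdef, OuterMeasure.ofFunction_apply]
    refine le_iInf fun f => le_iInf fun hf => ?_
    by_cases hfQ : ∀ i, f i ∈ measurableCylinders (fun _ : Λ => X)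
    · calc kolFun μ s ≤ ∑' i, kolFun μ (s ∩ f i) := by
            refine kolFun_tsum_le μ hproj hprob hs
              (fun i => KolmogorovAux.isSetRing_measurableCylinders.inter_mem hs (hfQ i)) ?_
            intro a ha
            obtain ⟨i, hi⟩ := Set.mem_iUnion.1 (hf ha)
            exact Set.mem_iUnion.2 ⟨i, ha, hi⟩
        _ ≤ ∑' i, kolFun μ (f i) :=
            ENNReal.tsum_le_tsum fun i => kolFun_mono μ hproj
              (KolmogorovAux.isSetRing_measurableCylinders.inter_mem hs (hfQ i)) (hfQ i)
              Set.inter_subset_right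
    · obtain ⟨i, hi⟩ := not_forall.1 hfQ
      have htop : kolFun μ (f i) = ∞ := kolFun_of_not_mem μ hi
      calc kolFun μ s ≤ ∞ := le_top
        _ = kolFun μ (f i) := htop.symm
        _ ≤ ∑' i, kolFun μ (f i) := ENNReal.le_tsum i
  -- cylinders are Carathéodory measurable
  have hcar : (MeasurableSpace.pi : MeasurableSpace (Λ → X)) ≤ ν.caratheodory := by
    rw [← generateFrom_measurableCylinders (α := fun _ : Λ => X)]
    refine MeasurableSpace.generateFrom_le fun t ht => ?_
    refine OuterMeasure.ofFunction_caratheodory fun u => ?_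
    by_cases hu : u ∈ measurableCylinders (fun _ : Λ => X)
    · have h1 : u ∩ t ∈ measurableCylinders (fun _ : Λ => X) :=
        KolmogorovAux.isSetRing_measurableCylinders.inter_mem hu ht
      have h2 : u \ t ∈ measurableCylinders (fun _ : Λ => X) :=
        KolmogorovAux.isSetRing_measurableCylinders.sdiff_mem hu ht
      have hdisj : Disjoint (u ∩ t) (u \ t) :=
        Set.disjoint_sdiff_right.mono_left Set.inter_subset_right
      have := kolFun_union μ hproj h1 h2 hdisj
      rw [Set.inter_union_diff] at this
      exact this.ge
    · have htop : kolFun μ u = ∞ := kolFun_of_not_mem μ hu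
      rw [htop]
      exact le_top
  -- the candidate measure
  set m : Measure (Λ → X) := ν.toMeasure hcar with hmdef
  have hm_cyl : ∀ (J : Finset Λ) (S : Set (↥J → X)), MeasurableSet S →
      m (cylinder J S) = μ J S := by
    intro J S hS
    rw [hmdef, toMeasure_apply ν hcar (MeasurableSet.cylinder J hS),
      hν_eq _ (cylinder_mem_measurableCylinders J S hS), kolFun_cylinder μ hproj J hS]
  have hmap : ∀ F : Finset Λ, Measure.map (fun (x : Λ → X) (i : F) => x i.1) m = μ F := by
    intro F
    have hrm : Measurable (fun (x : Λ → X) (i : F) => x i.1) :=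
      Finset.measurable_restrict (X := fun _ : Λ => X) F
    refine Measure.ext fun S hS => ?_
    rw [Measure.map_apply hrm hS]
    exact hm_cyl F S hS
  have hprob_m : IsProbabilityMeasure m := by
    constructor
    have h := hm_cyl ∅ Set.univ MeasurableSet.univ
    rw [cylinder_univ] at h
    rw [h]
    exact (hprob ∅).measure_univ
  refine ⟨m, ⟨hprob_m, hmap⟩, ?_⟩
  rintro m' ⟨hprob', hmap'⟩
  haveI := hprob'
  haveI := hprob_m
  refine ext_of_generate_finite (measurableCylinders (fun _ : Λ => X))
    (generateFrom_measurableCylinders (α := fun _ : Λ => X)).symm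
    isPiSystem_measurableCylinders ?_ ?_
  · intro s hs
    obtain ⟨J, S, hS, rfl⟩ := (mem_measurableCylinders (α := fun _ : Λ => X) _).1 hs
    have hrm : Measurable (fun (x : Λ → X) (i : J) => x i.1) :=
      Finset.measurable_restrict (X := fun _ : Λ => X) J
    have h1 : m' (cylinder J S) = μ J S := by
      rw [← hmap' J, Measure.map_apply hrm hS]
      rfl
    have h2 : m (cylinder J S) = μ J S := hm_cyl J S hS
    rw [h1, h2]
  · rw [hprob'.measure_univ, hprob_m.measure_univ]
end
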